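/- arXiv:1012.2630 — 2 statements merged into one kernel-verified Lean document; each statement's English description precedes it below -/
import Mathlib

section
/- For every three-qubit array v : Fin 2 → Fin 2 → Fin 2 → ℝ, the invariant tuple N(v) = (n₁(v), n₂(v), n₃(v), ñ₄(v)) is one of the following seven tuples: (2,2,2,8), (1,1,1,4), (0,0,1,3), (0,1,0,3), (1,0,0,3), (0,0,0,1), (0,0,0,0). (Completeness of the entanglement classification of three qubits: there are exactly these seven possible values of the algebraic invariants.) -/
/-!
The four invariants are unchanged by invertible local transformations `g₁ ⊗ g₂ ⊗ g₃` and are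
permuted along with the legs, so it suffices to compute them on normal forms. If some `nᵢ > 0`,
say `n₁`, the two first-leg slices of `v` are proportional, `v = a ⊗ M`: a singular `M` makes `v`
a product `a ⊗ b ⊗ c` (normal form `e₀ ⊗ e₀ ⊗ e₀`, giving `(1, 1, 1, 4)`), an invertible `M`
makes it biseparable (normal form `e₀ ⊗ 1`, giving `(1, 0, 0, 3)`). If all `nᵢ = 0`, the pencil
`α A + β B` of third-leg slices has no common kernel, so it contains an invertible matrix; this
brings `v` to slices `(1, C)` with `C` not scalar, and then every element of `S₄` is determined
by one coordinate, so `ñ₄ ≤ 1`.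
-/

variable {d₁ d₂ d₃ : ℕ}

/-- Solution space `{w | ∀ j₂ j₃, ∑ j₁, v j₁ j₂ j₃ * w j₁ = 0}`. -/
def S₁ (v : Fin d₁ → Fin d₂ → Fin d₃ → ℝ) : Submodule ℝ (Fin d₁ → ℝ) where
  carrier := { w | ∀ j₂ j₃, ∑ j₁, v j₁ j₂ j₃ * w j₁ = 0 }
  zero_mem' := by intro j₂ j₃; simp
  add_mem' := by
    intro a b ha hb j₂ j₃
    simp only [Pi.add_apply, mul_add, Finset.sum_add_distrib]
    rw [ha j₂ j₃, hb j₂ j₃, add_zero]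
  smul_mem' := by
    intro c a ha j₂ j₃
    have hc : ∀ x y : ℝ, x * (c * y) = c * (x * y) := fun x y => mul_left_comm x c y
    simp only [Pi.smul_apply, smul_eq_mul, hc, ← Finset.mul_sum]
    rw [ha j₂ j₃, mul_zero]

/-- Solution space `{w | ∀ j₁ j₃, ∑ j₂, v j₁ j₂ j₃ * w j₂ = 0}`. -/
def S₂ (v : Fin d₁ → Fin d₂ → Fin d₃ → ℝ) : Submodule ℝ (Fin d₂ → ℝ) where
  carrier := { w | ∀ j₁ j₃, ∑ j₂, v j₁ j₂ j₃ * w j₂ = 0 }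
  zero_mem' := by intro j₁ j₃; simp
  add_mem' := by
    intro a b ha hb j₁ j₃
    simp only [Pi.add_apply, mul_add, Finset.sum_add_distrib]
    rw [ha j₁ j₃, hb j₁ j₃, add_zero]
  smul_mem' := by
    intro c a ha j₁ j₃
    have hc : ∀ x y : ℝ, x * (c * y) = c * (x * y) := fun x y => mul_left_comm x c y
    simp only [Pi.smul_apply, smul_eq_mul, hc, ← Finset.mul_sum]
    rw [ha j₁ j₃, mul_zero]

/-- Solution space `{w | ∀ j₁ j₂, ∑ j₃, v j₁ j₂ j₃ * w j₃ = 0}`. -/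
def S₃ (v : Fin d₁ → Fin d₂ → Fin d₃ → ℝ) : Submodule ℝ (Fin d₃ → ℝ) where
  carrier := { w | ∀ j₁ j₂, ∑ j₃, v j₁ j₂ j₃ * w j₃ = 0 }
  zero_mem' := by intro j₁ j₂; simp
  add_mem' := by
    intro a b ha hb j₁ j₂
    simp only [Pi.add_apply, mul_add, Finset.sum_add_distrib]
    rw [ha j₁ j₂, hb j₁ j₂, add_zero]
  smul_mem' := by
    intro c a ha j₁ j₂
    have hc : ∀ x y : ℝ, x * (c * y) = c * (x * y) := fun x y => mul_left_comm x c y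
    simp only [Pi.smul_apply, smul_eq_mul, hc, ← Finset.mul_sum]
    rw [ha j₁ j₂, mul_zero]

/-- Solution space of the three simultaneous pairwise contraction conditions
defining the intersection invariant `ñ₄`. -/
def S₄ (v : Fin d₁ → Fin d₂ → Fin d₃ → ℝ) :
    Submodule ℝ (Fin d₁ → Fin d₂ → Fin d₃ → ℝ) where
  carrier := { w |
    (∀ j₃ k₃, ∑ j₁, ∑ j₂, v j₁ j₂ j₃ * w j₁ j₂ k₃ = 0) ∧
    (∀ j₂ k₂, ∑ j₁, ∑ j₃, v j₁ j₂ j₃ * w j₁ k₂ j₃ = 0) ∧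
    (∀ j₁ k₁, ∑ j₂, ∑ j₃, v j₁ j₂ j₃ * w k₁ j₂ j₃ = 0) }
  zero_mem' := by
    refine ⟨?_, ?_, ?_⟩ <;> intro a b <;> simp
  add_mem' := by
    rintro a b ⟨ha1, ha2, ha3⟩ ⟨hb1, hb2, hb3⟩
    refine ⟨fun p q => ?_, fun p q => ?_, fun p q => ?_⟩ <;>
      simp only [Pi.add_apply, mul_add, Finset.sum_add_distrib]
    · rw [ha1 p q, hb1 p q, add_zero]
    · rw [ha2 p q, hb2 p q, add_zero]
    · rw [ha3 p q, hb3 p q, add_zero]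
  smul_mem' := by
    rintro c a ⟨ha1, ha2, ha3⟩
    have hc : ∀ x y : ℝ, x * (c * y) = c * (x * y) := fun x y => mul_left_comm x c y
    refine ⟨fun p q => ?_, fun p q => ?_, fun p q => ?_⟩ <;>
      simp only [Pi.smul_apply, smul_eq_mul, hc, ← Finset.mul_sum]
    · rw [ha1 p q, mul_zero]
    · rw [ha2 p q, mul_zero]
    · rw [ha3 p q, mul_zero]

/-- `n₁(v)`: the dimension of `S₁ v`. -/
noncomputable def n₁ (v : Fin d₁ → Fin d₂ → Fin d₃ → ℝ) : ℕ :=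
  Module.finrank ℝ (S₁ v)

/-- `n₂(v)`: the dimension of `S₂ v`. -/
noncomputable def n₂ (v : Fin d₁ → Fin d₂ → Fin d₃ → ℝ) : ℕ :=
  Module.finrank ℝ (S₂ v)

/-- `n₃(v)`: the dimension of `S₃ v`. -/
noncomputable def n₃ (v : Fin d₁ → Fin d₂ → Fin d₃ → ℝ) : ℕ :=
  Module.finrank ℝ (S₃ v)

/-- `ñ₄(v)`: the dimension of `S₄ v`. -/
noncomputable def n₄ (v : Fin d₁ → Fin d₂ → Fin d₃ → ℝ) : ℕ :=
  Module.finrank ℝ (S₄ v)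

open Matrix

lemma finrank_comap_equiv {R M N : Type*} [Ring R] [AddCommGroup M] [Module R M]
    [AddCommGroup N] [Module R N] (e : M ≃ₗ[R] N) (p : Submodule R N) :
    Module.finrank R (p.comap e.toLinearMap) = Module.finrank R p := by
  rw [Submodule.comap_equiv_eq_map_symm, LinearEquiv.finrank_map_eq]

lemma finrank_add_finrank_eq_of_eq_ker {K V W : Type*} [Field K] [AddCommGroup V] [Module K V]
    [FiniteDimensional K V] [AddCommGroup W] [Module K W] {p : Submodule K V} (f : V →ₗ[K] W)
    (hf : Function.Surjective f) (hp : p = LinearMap.ker f) :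
    Module.finrank K p + Module.finrank K W = Module.finrank K V := by
  rw [← f.finrank_range_add_finrank_ker, LinearMap.range_eq_top.mpr hf, finrank_top, hp,
    add_comm]

lemma exists_eq_smul_of_sum_smul_eq_zero {K E : Type*} [Field K] [AddCommGroup E] [Module K E]
    {x : Fin 2 → E} {w : Fin 2 → K} (hw : w ≠ 0) (h : ∑ i, w i • x i = 0) :
    ∃ (c : Fin 2 → K) (m : E), ∀ i, x i = c i • m := by
  rw [Fin.sum_univ_two] at h
  by_cases h₁ : w 1 = 0
  · have h₀ : w 0 ≠ 0 := fun h₀ => hw (funext <| Fin.forall_fin_two.mpr ⟨h₀, h₁⟩)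
    rw [h₁, zero_smul, add_zero, smul_eq_zero] at h
    exact ⟨![0, 1], x 1, Fin.forall_fin_two.mpr ⟨by simp [h.resolve_left h₀], by simp⟩⟩
  · refine ⟨![1, -(w 0 / w 1)], x 0, Fin.forall_fin_two.mpr ⟨by simp, ?_⟩⟩
    calc x 1 = (w 1)⁻¹ • (w 1 • x 1) := by rw [inv_smul_smul₀ h₁]
      _ = -(w 0 / w 1) • x 0 := by
        rw [eq_neg_of_add_eq_zero_right h, smul_neg, smul_smul, neg_smul, div_eq_inv_mul]
      _ = _ := by simp

lemma Matrix.exists_eq_vecMulVec_of_det_eq_zero {K : Type*} [Field K]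
    {M : Matrix (Fin 2) (Fin 2) K} (h : M.det = 0) : ∃ p q, M = vecMulVec p q := by
  obtain ⟨w, hw, hMw⟩ := exists_mulVec_eq_zero_iff.mpr h
  obtain ⟨c, m, hcm⟩ := exists_eq_smul_of_sum_smul_eq_zero (x := Mᵀ) hw <| by
    ext i; simpa [Finset.sum_apply, mulVec, dotProduct, mul_comm] using congrFun hMw i
  exact ⟨m, c, ext fun i j => by simpa [vecMulVec_apply, mul_comm] using congrFun (hcm j) i⟩

lemma exists_ne_zero_dotProduct_eq_zero_of_cross_eq_zero {K : Type*} [Field K] {p r : Fin 2 → K}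
    (h : p 0 * r 1 - p 1 * r 0 = 0) : ∃ w ≠ 0, p ⬝ᵥ w = 0 ∧ r ⬝ᵥ w = 0 := by
  obtain ⟨w, hw, hpr⟩ := (exists_mulVec_eq_zero_iff (M := of ![p, r])).mpr (by simpa [det_fin_two])
  exact ⟨w, hw, by simpa using congrFun hpr 0, by simpa using congrFun hpr 1⟩

lemma Matrix.exists_det_smul_add_smul_ne_zero {K : Type*} [Field K]
    {A B : Matrix (Fin 2) (Fin 2) K} (hl : ∀ w, w ᵥ* A = 0 → w ᵥ* B = 0 → w = 0)
    (hr : ∀ w, A *ᵥ w = 0 → B *ᵥ w = 0 → w = 0) : ∃ α β : K, (α • A + β • B).det ≠ 0 := by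
  by_contra! h
  obtain ⟨p, q, rfl⟩ := exists_eq_vecMulVec_of_det_eq_zero (by simpa using h 1 0)
  obtain ⟨r, u, rfl⟩ := exists_eq_vecMulVec_of_det_eq_zero (by simpa using h 0 1)
  have key : (p 0 * r 1 - p 1 * r 0) * (q 0 * u 1 - q 1 * u 0) = 0 := by
    have := h 1 1
    simp only [one_smul, det_fin_two, add_apply, vecMulVec_apply] at this
    linear_combination this
  rcases mul_eq_zero.mp key with hpr | hqu
  · obtain ⟨w, hw, hpw, hrw⟩ := exists_ne_zero_dotProduct_eq_zero_of_cross_eq_zero hpr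
    exact hw <| hl w (by rw [vecMul_vecMulVec, dotProduct_comm, hpw, zero_smul])
      (by rw [vecMul_vecMulVec, dotProduct_comm, hrw, zero_smul])
  · obtain ⟨w, hw, hqw, huw⟩ := exists_ne_zero_dotProduct_eq_zero_of_cross_eq_zero hqu
    exact hw <| hr w (by rw [vecMulVec_mulVec, hqw]; simp) (by rw [vecMulVec_mulVec, huw]; simp)

def e₀ : Fin 2 → ℝ := ![1, 0]

/-- Multiplication by the complex number `a 0 + a 1 * I`; its first column is `a`. -/
def rotScale (a : Fin 2 → ℝ) : Matrix (Fin 2) (Fin 2) ℝ := !![a 0, -a 1; a 1, a 0]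

lemma rotScale_mulVec_e₀ (a : Fin 2 → ℝ) : rotScale a *ᵥ e₀ = a := by
  ext i; fin_cases i <;> simp [rotScale, e₀]

lemma isUnit_rotScale {a : Fin 2 → ℝ} (ha : a ≠ 0) : IsUnit (rotScale a) := by
  rw [isUnit_iff_isUnit_det, isUnit_iff_ne_zero, rotScale, det_fin_two_of]
  intro h
  have h₀ : a 0 = 0 := by nlinarith [mul_self_nonneg (a 1)]
  have h₁ : a 1 = 0 := by nlinarith [mul_self_nonneg (a 0)]
  exact ha (funext (Fin.forall_fin_two.mpr ⟨h₀, h₁⟩))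

abbrev Tensor3 (d₁ d₂ d₃ : ℕ) := Fin d₁ → Fin d₂ → Fin d₃ → ℝ

def act₁ (g : Matrix (Fin d₁) (Fin d₁) ℝ) : Tensor3 d₁ d₂ d₃ →ₗ[ℝ] Tensor3 d₁ d₂ d₃ where
  toFun v i j k := ∑ l, g i l * v l j k
  map_add' v w := by ext; simp [mul_add, Finset.sum_add_distrib]
  map_smul' c v := by ext; simp [Finset.mul_sum, mul_left_comm]

@[simp]
lemma act₁_apply (g : Matrix (Fin d₁) (Fin d₁) ℝ) (v : Tensor3 d₁ d₂ d₃) (i j k) :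
    act₁ g v i j k = ∑ l, g i l * v l j k := rfl

lemma act₁_mul (g h : Matrix (Fin d₁) (Fin d₁) ℝ) :
    (act₁ (g * h) : Tensor3 d₁ d₂ d₃ →ₗ[ℝ] _) = act₁ g ∘ₗ act₁ h := by
  ext v i j k
  simp only [act₁_apply, LinearMap.comp_apply, mul_apply, Finset.sum_mul, Finset.mul_sum, mul_assoc]
  exact Finset.sum_comm

lemma act₁_one : (act₁ 1 : Tensor3 d₁ d₂ d₃ →ₗ[ℝ] _) = LinearMap.id := by
  ext v i j k
  simp [one_apply]

def act₁Equiv (u : (Matrix (Fin d₁) (Fin d₁) ℝ)ˣ) : Tensor3 d₁ d₂ d₃ ≃ₗ[ℝ] Tensor3 d₁ d₂ d₃ :=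
  .ofLinearMap (act₁ u) (act₁ ↑u⁻¹) (by rw [← act₁_mul, u.mul_inv, act₁_one])
    (by rw [← act₁_mul, u.inv_mul, act₁_one])

def swap₁₂ : Tensor3 d₁ d₂ d₃ ≃ₗ[ℝ] Tensor3 d₂ d₁ d₃ where
  toFun v j i k := v i j k
  invFun v i j k := v j i k
  map_add' _ _ := rfl
  map_smul' _ _ := rfl
  left_inv _ := rfl
  right_inv _ := rfl

def swap₁₃ : Tensor3 d₁ d₂ d₃ ≃ₗ[ℝ] Tensor3 d₃ d₂ d₁ where
  toFun v k j i := v i j k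
  invFun v i j k := v k j i
  map_add' _ _ := rfl
  map_smul' _ _ := rfl
  left_inv _ := rfl
  right_inv _ := rfl

@[simp] lemma swap₁₂_apply (v : Tensor3 d₁ d₂ d₃) (i j k) : swap₁₂ v j i k = v i j k := rfl
@[simp] lemma swap₁₃_apply (v : Tensor3 d₁ d₂ d₃) (i j k) : swap₁₃ v k j i = v i j k := rfl

def act₂ (g : Matrix (Fin d₂) (Fin d₂) ℝ) (v : Tensor3 d₁ d₂ d₃) : Tensor3 d₁ d₂ d₃ :=
  swap₁₂ (act₁ g (swap₁₂ v))

def act₃ (g : Matrix (Fin d₃) (Fin d₃) ℝ) (v : Tensor3 d₁ d₂ d₃) : Tensor3 d₁ d₂ d₃ :=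
  swap₁₃ (act₁ g (swap₁₃ v))

@[simp]
lemma act₂_apply (g : Matrix (Fin d₂) (Fin d₂) ℝ) (v : Tensor3 d₁ d₂ d₃) (i j k) :
    act₂ g v i j k = ∑ l, g j l * v i l k := rfl

@[simp]
lemma act₃_apply (g : Matrix (Fin d₃) (Fin d₃) ℝ) (v : Tensor3 d₁ d₂ d₃) (i j k) :
    act₃ g v i j k = ∑ l, g k l * v i j l := rfl

lemma S₃_swap₁₂ (v : Tensor3 d₁ d₂ d₃) : S₃ (swap₁₂ v) = S₃ v := by
  ext w; exact forall_comm
lemma S₁_swap₁₃ (v : Tensor3 d₁ d₂ d₃) : S₁ (swap₁₃ v) = S₃ v := by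
  ext w; exact forall_comm
lemma S₂_swap₁₃ (v : Tensor3 d₁ d₂ d₃) : S₂ (swap₁₃ v) = S₂ v := by
  ext w; exact forall_comm
lemma S₃_swap₁₃ (v : Tensor3 d₁ d₂ d₃) : S₃ (swap₁₃ v) = S₁ v := by
  ext w; exact forall_comm

lemma S₄_swap₁₂ (v : Tensor3 d₁ d₂ d₃) :
    S₄ (swap₁₂ v) = (S₄ v).comap swap₁₂.symm.toLinearMap := by
  ext w
  simp only [Submodule.mem_comap]
  refine ⟨fun ⟨h₃, h₂, h₁⟩ => ⟨fun a b => ?_, h₁, h₂⟩, fun ⟨h₃, h₂, h₁⟩ => ⟨fun a b => ?_, h₁, h₂⟩⟩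
  · rw [Finset.sum_comm]; exact h₃ a b
  · rw [Finset.sum_comm]; exact h₃ a b

lemma S₄_swap₁₃ (v : Tensor3 d₁ d₂ d₃) :
    S₄ (swap₁₃ v) = (S₄ v).comap swap₁₃.symm.toLinearMap := by
  ext w
  simp only [Submodule.mem_comap]
  refine ⟨fun ⟨h₃, h₂, h₁⟩ => ⟨fun a b => ?_, fun a b => ?_, fun a b => ?_⟩,
    fun ⟨h₃, h₂, h₁⟩ => ⟨fun a b => ?_, fun a b => ?_, fun a b => ?_⟩⟩
  all_goals rw [Finset.sum_comm]
  exacts [h₁ a b, h₂ a b, h₃ a b, h₁ a b, h₂ a b, h₃ a b]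

lemma n₁_swap₁₂ (v : Tensor3 d₁ d₂ d₃) : n₁ (swap₁₂ v) = n₂ v := rfl
lemma n₂_swap₁₂ (v : Tensor3 d₁ d₂ d₃) : n₂ (swap₁₂ v) = n₁ v := rfl
lemma n₃_swap₁₂ (v : Tensor3 d₁ d₂ d₃) : n₃ (swap₁₂ v) = n₃ v := by
  rw [n₃, n₃, S₃_swap₁₂]
lemma n₁_swap₁₃ (v : Tensor3 d₁ d₂ d₃) : n₁ (swap₁₃ v) = n₃ v := by
  rw [n₁, n₃, S₁_swap₁₃]
lemma n₂_swap₁₃ (v : Tensor3 d₁ d₂ d₃) : n₂ (swap₁₃ v) = n₂ v := by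
  rw [n₂, n₂, S₂_swap₁₃]
lemma n₃_swap₁₃ (v : Tensor3 d₁ d₂ d₃) : n₃ (swap₁₃ v) = n₁ v := by
  rw [n₁, n₃, S₃_swap₁₃]
lemma n₄_swap₁₂ (v : Tensor3 d₁ d₂ d₃) : n₄ (swap₁₂ v) = n₄ v := by
  rw [n₄, n₄, S₄_swap₁₂, finrank_comap_equiv]
lemma n₄_swap₁₃ (v : Tensor3 d₁ d₂ d₃) : n₄ (swap₁₃ v) = n₄ v := by
  rw [n₄, n₄, S₄_swap₁₃, finrank_comap_equiv]

lemma sum_sum_act_mul (g : Matrix (Fin d₁) (Fin d₁) ℝ) {κ : Type*} [Fintype κ]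
    (F G : Fin d₁ → κ → ℝ) :
    ∑ a, ∑ b, (∑ l, g a l * F l b) * G a b = ∑ a, ∑ b, F a b * ∑ l, g l a * G l b := by
  simp only [Finset.sum_mul, Finset.mul_sum]
  rw [Finset.sum_comm_cycle]
  refine Finset.sum_congr rfl fun l _ => Finset.sum_comm.trans ?_
  exact Finset.sum_congr rfl fun b _ => Finset.sum_congr rfl fun a _ => by ring

lemma S₁_act₁ (g : Matrix (Fin d₁) (Fin d₁) ℝ) (v : Tensor3 d₁ d₂ d₃) :
    S₁ (act₁ g v) = (S₁ v).comap (toLin' gᵀ) := by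
  ext w
  simp only [Submodule.mem_comap, toLin'_apply]
  refine forall₂_congr fun j k => ?_
  simp only [act₁_apply, mulVec, dotProduct, transpose_apply, Finset.sum_mul, Finset.mul_sum]
  rw [Finset.sum_comm]
  exact Iff.of_eq <| congrArg (· = (0 : ℝ)) <| Finset.sum_congr rfl fun _ _ =>
    Finset.sum_congr rfl fun _ _ => by ring

lemma S₃_le_S₃_act₁ (g : Matrix (Fin d₁) (Fin d₁) ℝ) (v : Tensor3 d₁ d₂ d₃) :
    S₃ v ≤ S₃ (act₁ g v) := by
  intro w hw i j
  simp only [act₁_apply, Finset.sum_mul, mul_assoc]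
  rw [Finset.sum_comm]
  simp only [← Finset.mul_sum, hw _ j, mul_zero, Finset.sum_const_zero]

lemma S₄_act₁ {g : Matrix (Fin d₁) (Fin d₁) ℝ} (hg : IsUnit g) (v : Tensor3 d₁ d₂ d₃) :
    S₄ (act₁ g v) = (S₄ v).comap (act₁ gᵀ) := by
  -- `P v w = 0` is the third condition; acting by `g` multiplies `P` by `g` on one side.
  let P : Tensor3 d₁ d₂ d₃ → Tensor3 d₁ d₂ d₃ → Matrix (Fin d₁) (Fin d₁) ℝ :=
    fun v w => of fun j₁ k₁ => ∑ j₂, ∑ j₃, v j₁ j₂ j₃ * w k₁ j₂ j₃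
  have hP_left (w) : P (act₁ g v) w = g * P v w := by
    ext j₁ k₁
    simp only [P, of_apply, act₁_apply, mul_apply, Finset.sum_mul, Finset.mul_sum]
    rw [Finset.sum_comm_cycle]
    exact Finset.sum_congr rfl fun _ _ => Finset.sum_congr rfl fun _ _ =>
      Finset.sum_congr rfl fun _ _ => by ring
  have hP_right (w) : P v (act₁ gᵀ w) = P v w * g := by
    ext j₁ k₁
    simp only [P, of_apply, act₁_apply, transpose_apply, mul_apply, Finset.sum_mul,
      Finset.mul_sum]
    rw [Finset.sum_comm_cycle]
    exact Finset.sum_congr rfl fun _ _ => Finset.sum_congr rfl fun _ _ =>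
      Finset.sum_congr rfl fun _ _ => by ring
  ext w
  simp only [Submodule.mem_comap]
  refine and_congr (forall₂_congr fun j₃ k₃ => ?_) (and_congr (forall₂_congr fun j₂ k₂ => ?_) ?_)
  · rw [show ∑ a, ∑ b, act₁ g v a b j₃ * w a b k₃ = ∑ a, ∑ b, v a b j₃ * act₁ gᵀ w a b k₃ from
      sum_sum_act_mul g (fun l b => v l b j₃) fun a b => w a b k₃]
  · rw [show ∑ a, ∑ c, act₁ g v a j₂ c * w a k₂ c = ∑ a, ∑ c, v a j₂ c * act₁ gᵀ w a k₂ c from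
      sum_sum_act_mul g (fun l c => v l j₂ c) fun a c => w a k₂ c]
  · change (∀ j₁ k₁, P (act₁ g v) w j₁ k₁ = (0 : Matrix _ _ ℝ) j₁ k₁) ↔
      ∀ j₁ k₁, P v (act₁ gᵀ w) j₁ k₁ = (0 : Matrix _ _ ℝ) j₁ k₁
    rw [Matrix.ext_iff, Matrix.ext_iff, hP_left, hP_right, hg.mul_right_eq_zero,
      hg.mul_left_eq_zero]

lemma n₁_act₁ {g : Matrix (Fin d₁) (Fin d₁) ℝ} (hg : IsUnit g) (v : Tensor3 d₁ d₂ d₃) :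
    n₁ (act₁ g v) = n₁ v := by
  have := ((isUnit_transpose g).mpr hg).invertible
  rw [n₁, n₁, S₁_act₁]
  exact finrank_comap_equiv (toLinearEquiv' gᵀ this) _

lemma n₃_act₁ {g : Matrix (Fin d₁) (Fin d₁) ℝ} (hg : IsUnit g) (v : Tensor3 d₁ d₂ d₃) :
    n₃ (act₁ g v) = n₃ v := by
  obtain ⟨u, rfl⟩ := hg
  have h := S₃_le_S₃_act₁ (↑u⁻¹ : Matrix _ _ ℝ) (act₁ (↑u) v)
  rw [← LinearMap.comp_apply, ← act₁_mul, u.inv_mul, act₁_one, LinearMap.id_apply] at h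
  rw [n₃, n₃, le_antisymm h (S₃_le_S₃_act₁ _ v)]

lemma n₄_act₁ {g : Matrix (Fin d₁) (Fin d₁) ℝ} (hg : IsUnit g) (v : Tensor3 d₁ d₂ d₃) :
    n₄ (act₁ g v) = n₄ v := by
  obtain ⟨u, hu⟩ := (isUnit_transpose g).mpr hg
  have he : (act₁ gᵀ : Tensor3 d₁ d₂ d₃ →ₗ[ℝ] _) = (act₁Equiv u).toLinearMap := by
    rw [← hu]; rfl
  rw [n₄, n₄, S₄_act₁ hg, he, finrank_comap_equiv]

lemma n₄_act₂ {g : Matrix (Fin d₂) (Fin d₂) ℝ} (hg : IsUnit g) (v : Tensor3 d₁ d₂ d₃) :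
    n₄ (act₂ g v) = n₄ v := by
  rw [act₂, n₄_swap₁₂, n₄_act₁ hg, n₄_swap₁₂]

lemma n₄_act₃ {g : Matrix (Fin d₃) (Fin d₃) ℝ} (hg : IsUnit g) (v : Tensor3 d₁ d₂ d₃) :
    n₄ (act₃ g v) = n₄ v := by
  rw [act₃, n₄_swap₁₃, n₄_act₁ hg, n₄_swap₁₃]

lemma n₃_act₃ {g : Matrix (Fin d₃) (Fin d₃) ℝ} (hg : IsUnit g) (v : Tensor3 d₁ d₂ d₃) :
    n₃ (act₃ g v) = n₃ v := by
  rw [act₃, n₃_swap₁₃, n₁_act₁ hg, n₁_swap₁₃]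

lemma n₁_zero : n₁ (0 : Tensor3 d₁ d₂ d₃) = d₁ := by
  rw [n₁, show S₁ (0 : Tensor3 d₁ d₂ d₃) = ⊤ from eq_top_iff.mpr fun w _ j k => by simp,
    finrank_top, Module.finrank_fin_fun]

lemma n₂_zero : n₂ (0 : Tensor3 d₁ d₂ d₃) = d₂ := by
  rw [← n₁_swap₁₂, map_zero, n₁_zero]

lemma n₃_zero : n₃ (0 : Tensor3 d₁ d₂ d₃) = d₃ := by
  rw [← n₁_swap₁₃, map_zero, n₁_zero]

lemma n₄_zero : n₄ (0 : Tensor3 d₁ d₂ d₃) = d₁ * (d₂ * d₃) := by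
  rw [n₄, show S₄ (0 : Tensor3 d₁ d₂ d₃) = ⊤ from eq_top_iff.mpr fun w _ => by
    refine ⟨fun _ _ => ?_, fun _ _ => ?_, fun _ _ => ?_⟩ <;> simp, finrank_top]
  simp [Module.finrank_pi_fintype]

lemma eq_zero_of_n₁_eq {v : Tensor3 d₁ d₂ d₃} (h : n₁ v = d₁) : v = 0 := by
  have htop : S₁ v = ⊤ := Submodule.eq_top_of_finrank_eq (by rw [← n₁, h, Module.finrank_fin_fun])
  funext i j k
  have hi : Pi.single i 1 ∈ S₁ v := htop ▸ Submodule.mem_top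
  simpa [Pi.single_apply] using hi j k

lemma n₁_lt {v : Tensor3 d₁ d₂ d₃} (hv : v ≠ 0) : n₁ v < d₁ :=
  lt_of_le_of_ne ((Submodule.finrank_le _).trans_eq (Module.finrank_fin_fun ℝ))
    (hv ∘ eq_zero_of_n₁_eq)

lemma n₂_lt {v : Tensor3 d₁ d₂ d₃} (hv : v ≠ 0) : n₂ v < d₂ :=
  n₁_swap₁₂ v ▸ n₁_lt (swap₁₂.map_ne_zero_iff.mpr hv)

lemma n₃_lt {v : Tensor3 d₁ d₂ d₃} (hv : v ≠ 0) : n₃ v < d₃ :=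
  n₁_swap₁₃ v ▸ n₁_lt (swap₁₃.map_ne_zero_iff.mpr hv)

lemma n₁_pos_iff {v : Tensor3 d₁ d₂ d₃} : 0 < n₁ v ↔ ∃ w ∈ S₁ v, w ≠ 0 :=
  Submodule.one_le_finrank_iff.trans (Submodule.ne_bot_iff _)

def outer₁ (a : Fin d₁ → ℝ) (M : Matrix (Fin d₂) (Fin d₃) ℝ) : Tensor3 d₁ d₂ d₃ :=
  fun i j k => a i * M j k

lemma act₁_outer₁ (g : Matrix (Fin d₁) (Fin d₁) ℝ) (a : Fin d₁ → ℝ)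
    (M : Matrix (Fin d₂) (Fin d₃) ℝ) : act₁ g (outer₁ a M) = outer₁ (g *ᵥ a) M := by
  ext; simp [outer₁, mulVec, dotProduct, Finset.sum_mul, mul_assoc]

lemma act₂_outer₁ (g : Matrix (Fin d₂) (Fin d₂) ℝ) (a : Fin d₁ → ℝ)
    (M : Matrix (Fin d₂) (Fin d₃) ℝ) : act₂ g (outer₁ a M) = outer₁ a (g * M) := by
  ext; simp [outer₁, mul_apply, Finset.mul_sum, mul_left_comm]

lemma act₃_outer₁ (g : Matrix (Fin d₃) (Fin d₃) ℝ) (a : Fin d₁ → ℝ)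
    (M : Matrix (Fin d₂) (Fin d₃) ℝ) : act₃ g (outer₁ a M) = outer₁ a (M * gᵀ) := by
  ext; simp [outer₁, mul_apply, Finset.mul_sum, mul_left_comm, mul_comm]

lemma exists_eq_outer₁_of_n₁_pos {v : Tensor3 2 d₂ d₃} (h : 0 < n₁ v) :
    ∃ a M, v = outer₁ a M := by
  obtain ⟨w, hw, hw0⟩ := n₁_pos_iff.mp h
  obtain ⟨a, M, haM⟩ := exists_eq_smul_of_sum_smul_eq_zero (x := v) hw0 <| by
    ext j k; simpa [Finset.sum_apply, mul_comm] using hw j k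
  exact ⟨a, M, funext fun i => by rw [haM]; rfl⟩

lemma n₁_outer₁_pos {a : Fin 2 → ℝ} (ha : a ≠ 0) (M : Matrix (Fin d₂) (Fin d₃) ℝ) :
    0 < n₁ (outer₁ a M) := by
  refine n₁_pos_iff.mpr ⟨![a 1, -a 0], fun j k => ?_, fun h => ha ?_⟩
  · simp only [outer₁, Fin.sum_univ_two]; simp; ring
  · have h₀ := congrFun h 0; have h₁ := congrFun h 1
    simp at h₀ h₁
    exact funext (Fin.forall_fin_two.mpr ⟨h₁, h₀⟩)

lemma S₃_outer₁_eq_bot {a : Fin d₁ → ℝ} (ha : a ≠ 0) {M : Matrix (Fin d₂) (Fin d₂) ℝ}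
    (hM : IsUnit M) : S₃ (outer₁ a M) = ⊥ := by
  obtain ⟨i, hi⟩ := Function.ne_iff.mp ha
  refine eq_bot_iff.mpr fun w hw => (Submodule.mem_bot ℝ).mpr <|
    mulVec_injective_iff_isUnit.mpr hM <| (mulVec_zero M).symm ▸ funext fun j => ?_
  have h := hw i j
  simp only [outer₁, mul_assoc, ← Finset.mul_sum] at h
  exact (mul_eq_zero.mp h).resolve_left hi

lemma n₃_outer₁_of_isUnit {a : Fin d₁ → ℝ} (ha : a ≠ 0) {M : Matrix (Fin d₂) (Fin d₂) ℝ}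
    (hM : IsUnit M) : n₃ (outer₁ a M) = 0 := by
  rw [n₃, S₃_outer₁_eq_bot ha hM, finrank_bot]

lemma n₂_outer₁_of_isUnit {a : Fin d₁ → ℝ} (ha : a ≠ 0) {M : Matrix (Fin d₂) (Fin d₂) ℝ}
    (hM : IsUnit M) : n₂ (outer₁ a M) = 0 :=
  n₃_outer₁_of_isUnit ha ((isUnit_transpose M).mpr hM)

lemma n₄_outer₁_e₀_one : n₄ (outer₁ e₀ (1 : Matrix (Fin 2) (Fin 2) ℝ)) = 3 := by
  let f : Tensor3 2 2 2 →ₗ[ℝ] (Fin 5 → ℝ) :=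
    { toFun w := ![w 0 0 0, w 0 0 1, w 0 1 0, w 0 1 1, w 1 0 0 + w 1 1 1]
      map_add' _ _ := by ext i; fin_cases i <;> simp; ring
      map_smul' _ _ := by ext i; fin_cases i <;> simp; ring }
  have hf : Function.Surjective f := fun y =>
    ⟨![![![y 0, y 1], ![y 2, y 3]], ![![y 4, 0], ![0, 0]]], by ext i; fin_cases i <;> simp [f]⟩
  have hS : S₄ (outer₁ e₀ 1) = LinearMap.ker f := by
    ext w
    simp [S₄, f, outer₁, e₀, Fin.sum_univ_two, one_apply, funext_iff, Fin.forall_fin_succ]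
    constructor <;> intro h <;> simp_all
  have := finrank_add_finrank_eq_of_eq_ker f hf hS
  simp [Module.finrank_pi_fintype] at this
  rw [n₄]; omega

lemma n₄_outer₁_e₀_vecMulVec : n₄ (outer₁ e₀ (vecMulVec e₀ e₀)) = 4 := by
  let f : Tensor3 2 2 2 →ₗ[ℝ] (Fin 4 → ℝ) :=
    { toFun w := ![w 0 0 0, w 0 0 1, w 0 1 0, w 1 0 0]
      map_add' _ _ := by ext i; fin_cases i <;> simp
      map_smul' _ _ := by ext i; fin_cases i <;> simp }
  have hf : Function.Surjective f := fun y =>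
    ⟨![![![y 0, y 1], ![y 2, 0]], ![![y 3, 0], ![0, 0]]], by ext i; fin_cases i <;> simp [f]⟩
  have hS : S₄ (outer₁ e₀ (vecMulVec e₀ e₀)) = LinearMap.ker f := by
    ext w
    simp [S₄, f, outer₁, e₀, vecMulVec_apply, Fin.sum_univ_two, funext_iff, Fin.forall_fin_succ]
    constructor <;> intro h <;> simp_all
  have := finrank_add_finrank_eq_of_eq_ker f hf hS
  simp [Module.finrank_pi_fintype] at this
  rw [n₄]; omega

lemma n₄_outer₁_of_isUnit {a : Fin 2 → ℝ} (ha : a ≠ 0) {M : Matrix (Fin 2) (Fin 2) ℝ}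
    (hM : IsUnit M) : n₄ (outer₁ a M) = 3 := by
  have h : outer₁ a M = act₁ (rotScale a) (act₂ M (outer₁ e₀ 1)) := by
    rw [act₂_outer₁, act₁_outer₁, mul_one, rotScale_mulVec_e₀]
  rw [h, n₄_act₁ (isUnit_rotScale ha), n₄_act₂ hM, n₄_outer₁_e₀_one]

lemma n₄_outer₁_vecMulVec {a b c : Fin 2 → ℝ} (ha : a ≠ 0) (hb : b ≠ 0) (hc : c ≠ 0) :
    n₄ (outer₁ a (vecMulVec b c)) = 4 := by
  have h : outer₁ a (vecMulVec b c) = act₁ (rotScale a)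
      (act₂ (rotScale b) (act₃ (rotScale c) (outer₁ e₀ (vecMulVec e₀ e₀)))) := by
    rw [act₃_outer₁, act₂_outer₁, act₁_outer₁, vecMulVec_mul, vecMul_transpose, mul_vecMulVec,
      rotScale_mulVec_e₀, rotScale_mulVec_e₀, rotScale_mulVec_e₀]
  rw [h, n₄_act₁ (isUnit_rotScale ha), n₄_act₂ (isUnit_rotScale hb),
    n₄_act₃ (isUnit_rotScale hc), n₄_outer₁_e₀_vecMulVec]

lemma n₂_n₃_n₄_of_n₁_pos {v : Tensor3 2 2 2} (hv : v ≠ 0) (h : 0 < n₁ v) :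
    (n₂ v = 1 ∧ n₃ v = 1 ∧ n₄ v = 4) ∨ (n₂ v = 0 ∧ n₃ v = 0 ∧ n₄ v = 3) := by
  obtain ⟨a, M, rfl⟩ := exists_eq_outer₁_of_n₁_pos h
  have ha : a ≠ 0 := by rintro rfl; exact hv (by ext; simp [outer₁])
  by_cases hM : M.det = 0
  · obtain ⟨b, c, rfl⟩ := exists_eq_vecMulVec_of_det_eq_zero hM
    have hb : b ≠ 0 := by rintro rfl; exact hv (by ext; simp [outer₁])
    have hc : c ≠ 0 := by rintro rfl; exact hv (by ext; simp [outer₁])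
    have h₂ : 0 < n₂ (outer₁ a (vecMulVec b c)) := by
      rw [← n₁_swap₁₂, show swap₁₂ (outer₁ a (vecMulVec b c)) = outer₁ b (vecMulVec a c) by
        ext; simp [outer₁, vecMulVec_apply]; ring]
      exact n₁_outer₁_pos hb _
    have h₃ : 0 < n₃ (outer₁ a (vecMulVec b c)) := by
      rw [← n₁_swap₁₃, show swap₁₃ (outer₁ a (vecMulVec b c)) = outer₁ c (vecMulVec b a) by
        ext; simp [outer₁, vecMulVec_apply]; ring]
      exact n₁_outer₁_pos hc _
    have := n₂_lt hv
    have := n₃_lt hv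
    exact .inl ⟨by omega, by omega, n₄_outer₁_vecMulVec ha hb hc⟩
  · have hM : IsUnit M := (isUnit_iff_isUnit_det M).mpr (isUnit_iff_ne_zero.mpr hM)
    exact .inr ⟨n₂_outer₁_of_isUnit ha hM, n₃_outer₁_of_isUnit ha hM, n₄_outer₁_of_isUnit ha hM⟩

lemma S₄_relations_of_slice_eq_one {v w : Tensor3 2 2 2}
    (h0 : ∀ i j, v i j 0 = (1 : Matrix (Fin 2) (Fin 2) ℝ) i j) (hw : w ∈ S₄ v) :
    (v 0 1 1 * w 0 1 1 - v 1 0 1 * w 1 0 1 = 0 ∧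
      (v 0 0 1 - v 1 1 1) * w 0 1 1 - 2 * v 1 0 1 * w 0 0 1 = 0 ∧
      (v 0 0 1 - v 1 1 1) * w 1 0 1 - 2 * v 0 1 1 * w 0 0 1 = 0) ∧
    (w 0 0 1 = 0 → w 0 1 1 = 0 → w 1 0 1 = 0 → w = 0) := by
  -- The relations say that the trace-free slice `w · · 1` commutes with `(v · · 1)ᵀ`;
  -- the remaining coordinates of `w` are linear in that slice.
  obtain ⟨h₁, h₂, h₃⟩ := hw
  simp only [Fin.forall_fin_two, Fin.sum_univ_two, h0, one_apply_eq, one_apply_ne zero_ne_one,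
    one_apply_ne one_ne_zero, zero_mul, one_mul, zero_add, add_zero] at h₁ h₂ h₃
  obtain ⟨⟨a₁, a₂⟩, -, -⟩ := h₁
  obtain ⟨⟨b₁, b₂⟩, b₃, -⟩ := h₂
  obtain ⟨⟨c₁, c₂⟩, c₃, -⟩ := h₃
  refine ⟨⟨by linear_combination c₁ - b₁, by linear_combination b₂ - c₃ - v 1 0 1 * a₂,
    by linear_combination c₂ - b₃ - v 0 1 1 * a₂⟩, fun h001 h011 h101 => ?_⟩
  have h111 : w 1 1 1 = 0 := by linear_combination a₂ - h001
  have h000 : w 0 0 0 = 0 := by linear_combination c₁ - v 0 0 1 * h001 - v 0 1 1 * h011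
  have h110 : w 1 1 0 = 0 := by linear_combination a₁ - h000
  have h010 : w 0 1 0 = 0 := by linear_combination b₂ - v 0 0 1 * h011 - v 1 0 1 * h111
  have h100 : w 1 0 0 = 0 := by linear_combination c₂ - v 0 0 1 * h101 - v 0 1 1 * h111
  ext i j k
  fin_cases i <;> fin_cases j <;> fin_cases k <;> simp only [Pi.zero_apply] <;> assumption

lemma n₄_le_one_of_slice_eq_one {v : Tensor3 2 2 2}
    (h0 : ∀ i j, v i j 0 = (1 : Matrix (Fin 2) (Fin 2) ℝ) i j) (h₃ : n₃ v = 0) : n₄ v ≤ 1 := by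
  -- the slice `v · · 1` is not scalar
  have hC : v 0 1 1 ≠ 0 ∨ v 1 0 1 ≠ 0 ∨ v 0 0 1 ≠ v 1 1 1 := by
    by_contra! hC
    have hmem : ![v 0 0 1, -1] ∈ S₃ v := fun i j => by
      fin_cases i <;> fin_cases j <;> simp [Fin.sum_univ_two, h0, hC.1, hC.2.1, hC.2.2]
    rw [n₃, Submodule.finrank_eq_zero] at h₃
    rw [h₃, Submodule.mem_bot] at hmem
    simpa using congrFun hmem 1
  obtain ⟨i, j, hij⟩ : ∃ i j : Fin 2, ∀ w ∈ S₄ v, w i j 1 = 0 → w = 0 := by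
    rcases hC with hq | hr | hps
    · refine ⟨1, 0, fun w hw h101 => ?_⟩
      obtain ⟨⟨K₁, -, K₃⟩, hzero⟩ := S₄_relations_of_slice_eq_one h0 hw
      refine hzero ?_ ?_ h101 <;> refine (mul_eq_zero.mp ?_).resolve_left hq
      · linear_combination (-1 / 2 : ℝ) * K₃ + (v 0 0 1 - v 1 1 1) / 2 * h101
      · linear_combination K₁ + v 1 0 1 * h101
    · refine ⟨0, 1, fun w hw h011 => ?_⟩
      obtain ⟨⟨K₁, K₂, -⟩, hzero⟩ := S₄_relations_of_slice_eq_one h0 hw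
      refine hzero ?_ h011 ?_ <;> refine (mul_eq_zero.mp ?_).resolve_left hr
      · linear_combination (-1 / 2 : ℝ) * K₂ + (v 0 0 1 - v 1 1 1) / 2 * h011
      · linear_combination -K₁ + v 0 1 1 * h011
    · refine ⟨0, 0, fun w hw h001 => ?_⟩
      obtain ⟨⟨-, K₂, K₃⟩, hzero⟩ := S₄_relations_of_slice_eq_one h0 hw
      refine hzero h001 ?_ ?_ <;> refine (mul_eq_zero.mp ?_).resolve_left (sub_ne_zero.mpr hps)
      · linear_combination K₂ + 2 * v 1 0 1 * h001
      · linear_combination K₃ + 2 * v 0 1 1 * h001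
  let φ : S₄ v →ₗ[ℝ] ℝ :=
    LinearMap.proj 1 ∘ₗ LinearMap.proj j ∘ₗ LinearMap.proj i ∘ₗ (S₄ v).subtype
  have hφ : Function.Injective φ :=
    (injective_iff_map_eq_zero φ).mpr fun w hw => Subtype.ext (hij w w.2 hw)
  exact (LinearMap.finrank_le_finrank_of_injective hφ).trans_eq (Module.finrank_self ℝ)

lemma n₄_le_one_of_n₁_n₂_n₃_eq_zero {v : Tensor3 2 2 2} (h₁ : n₁ v = 0) (h₂ : n₂ v = 0)
    (h₃ : n₃ v = 0) : n₄ v ≤ 1 := by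
  rw [n₁, Submodule.finrank_eq_zero] at h₁
  rw [n₂, Submodule.finrank_eq_zero] at h₂
  let A : Matrix (Fin 2) (Fin 2) ℝ := of fun i j => v i j 0
  let B : Matrix (Fin 2) (Fin 2) ℝ := of fun i j => v i j 1
  obtain ⟨α, β, hdet⟩ := exists_det_smul_add_smul_ne_zero (A := A) (B := B)
    (fun w hA hB => by
      have hw : w ∈ S₁ v := fun j k => by
        fin_cases k
        · have h := congrFun hA j
          simp [vecMul, dotProduct, A, Fin.sum_univ_two] at h ⊢
          linear_combination h
        · have h := congrFun hB j
          simp [vecMul, dotProduct, B, Fin.sum_univ_two] at h ⊢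
          linear_combination h
      rwa [h₁, Submodule.mem_bot] at hw)
    (fun w hA hB => by
      have hw : w ∈ S₂ v := fun i k => by
        fin_cases k
        · simpa [mulVec, dotProduct, A] using congrFun hA i
        · simpa [mulVec, dotProduct, B] using congrFun hB i
      rwa [h₂, Submodule.mem_bot] at hw)
  set M := α • A + β • B
  have hM : IsUnit M := (isUnit_iff_isUnit_det M).mpr (isUnit_iff_ne_zero.mpr hdet)
  have hM' : IsUnit M⁻¹ := isUnit_nonsing_inv_iff.mpr hM
  have hR : IsUnit (rotScale ![α, -β]) := isUnit_rotScale fun h => hdet <| by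
    have h₀ := congrFun h 0
    have h₁ := congrFun h 1
    simp only [cons_val_zero, cons_val_one, Pi.zero_apply, neg_eq_zero] at h₀ h₁
    simp [M, h₀, h₁]
  -- The first row of `rotScale ![α, -β]` is `(α, β)`, so the first slice of `v'` is `M⁻¹ * M`.
  let v' := act₁ M⁻¹ (act₃ (rotScale ![α, -β]) v)
  have h0 : ∀ i j, v' i j 0 = (1 : Matrix (Fin 2) (Fin 2) ℝ) i j := fun i j => by
    rw [← nonsing_inv_mul M ((isUnit_iff_isUnit_det M).mp hM)]
    simp [v', mul_apply, rotScale, M, A, B]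
  calc n₄ v = n₄ v' := by rw [n₄_act₁ hM', n₄_act₃ hR]
    _ ≤ 1 := n₄_le_one_of_slice_eq_one h0 (by rw [n₃_act₁ hM', n₃_act₃ hR, h₃])

/-- **Completeness of the three-qubit classification.**
For every three-qubit array `v`, the invariant tuple
`N(v) = (n₁ v, n₂ v, n₃ v, ñ₄ v)` takes one of exactly seven values. -/
theorem three_qubit_invariant_values (v : Fin 2 → Fin 2 → Fin 2 → ℝ) :
    (n₁ v, n₂ v, n₃ v, n₄ v) ∈
      ({(2, 2, 2, 8), (1, 1, 1, 4), (0, 0, 1, 3), (0, 1, 0, 3),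
        (1, 0, 0, 3), (0, 0, 0, 1), (0, 0, 0, 0)} : Set (ℕ × ℕ × ℕ × ℕ)) := by
  rcases eq_or_ne v 0 with rfl | hv
  · simp [n₁_zero, n₂_zero, n₃_zero, n₄_zero]
  have h₁ := n₁_lt hv
  have h₂ := n₂_lt hv
  have h₃ := n₃_lt hv
  by_cases p₁ : 0 < n₁ v
  · rcases n₂_n₃_n₄_of_n₁_pos hv p₁ with ⟨e₂, e₃, e₄⟩ | ⟨e₂, e₃, e₄⟩ <;>
      simp [e₂, e₃, e₄, show n₁ v = 1 by omega]
  by_cases p₂ : 0 < n₂ v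
  · have h := n₂_n₃_n₄_of_n₁_pos (swap₁₂.map_ne_zero_iff.mpr hv) p₂
    rw [n₂_swap₁₂, n₃_swap₁₂, n₄_swap₁₂] at h
    rcases h with ⟨e₁, -, -⟩ | ⟨e₁, e₃, e₄⟩
    · omega
    · simp [e₁, e₃, e₄, show n₂ v = 1 by omega]
  by_cases p₃ : 0 < n₃ v
  · have h := n₂_n₃_n₄_of_n₁_pos (swap₁₃.map_ne_zero_iff.mpr hv) (by rwa [n₁_swap₁₃])
    rw [n₂_swap₁₃, n₃_swap₁₃, n₄_swap₁₃] at h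
    rcases h with ⟨-, e₁, -⟩ | ⟨e₂, e₁, e₄⟩
    · omega
    · simp [e₁, e₂, e₄, show n₃ v = 1 by omega]
  have h₄ := n₄_le_one_of_n₁_n₂_n₃_eq_zero (v := v) (by omega) (by omega) (by omega)
  interval_cases h : n₄ v <;> simp [show n₁ v = 0 by omega, show n₂ v = 0 by omega,
    show n₃ v = 0 by omega]
end

section
/- Let d₁, d₂, d₃ be positive integers, let v : Fin d₁ → Fin d₂ → Fin d₃ → ℝ, and let k₁, k₂ be positive integers with k₁ ≤ d₁, k₂ ≤ d₂, and k₁·k₂ ≤ d₃. Suppose the nullities satisfy n₁(v) = d₁ − k₁, n₂(v) = d₂ − k₂, and n₃(v) = d₃ − k₁·k₂. Then ñ₄(v) = d₁·d₂·d₃ − k₁·d₁ − k₂·d₂ − k₁·k₂·d₃ + k₁² + k₂². (This is the paper's claim that M_{k₁,k₂,k₁k₂} = (k₁² + k₂²) is a singleton: the value of the intersection invariant is completely determined when k₃ = k₁k₂.) -/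
variable {d₁ d₂ d₃ : ℕ}

/-!
Let `V₁ ⊆ ℝ^d₁` and `V₂ ⊆ ℝ^d₂` be the spans of the fibres of `v` along the first and second
index, so `dim V₁ = k₁`, `dim V₂ = k₂`, and let `P`, `Q` be the orthogonal projections onto them,
acting on the first resp. second index of an array. The slices `v(·,·,j₃)` span a subspace of
`V₁ ⊗ V₂` of dimension `k₁k₂`, hence all of it, so condition (i) forces `PQw = 0`. The solution
space is invariant under `P` and `Q`, so it splits into its parts in `range P ∩ ker Q`,
`ker P ∩ range Q` and `ker P ∩ ker Q`. The last one is all of `V₁ᗮ ⊗ V₂ᗮ ⊗ ℝ^d₃`. The middle one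
is `V₁ᗮ ⊗ Z`, where `Z ⊆ V₂ ⊗ ℝ^d₃` is the kernel of the contraction with `v`, which maps
`V₂ ⊗ ℝ^d₃` onto `V₁`; so `dim Z = k₂d₃ - k₁`. The first one is the mirror image under swapping
the first two indices. Hence `ñ₄ = (d₁-k₁)(k₂d₃-k₁) + (d₂-k₂)(k₁d₃-k₂) + (d₁-k₁)(d₂-k₂)d₃`.
-/

open Module Submodule LinearMap

section TensorPi

variable {K : Type*} [Field K] {ι : Type*} {N : Type*} [AddCommGroup N] [Module K N]

/-- `U ⊗ Z` realised inside `ι → N ≅ (ι → K) ⊗ N`. -/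
def Submodule.tensorPi (U : Submodule K (ι → K)) (Z : Submodule K N) : Submodule K (ι → N) :=
  (⨅ φ : Dual K N, U.comap (φ.compLeft ι)) ⊓ pi Set.univ (fun _ => Z)

variable {U : Submodule K (ι → K)} {Z : Submodule K N}

theorem Submodule.mem_tensorPi {m : ι → N} :
    m ∈ U.tensorPi Z ↔ (∀ φ : Dual K N, φ ∘ m ∈ U) ∧ ∀ i, m i ∈ Z := by
  simp only [tensorPi, mem_inf, mem_iInf, mem_comap, mem_pi, Set.mem_univ, true_implies]
  rfl

theorem Submodule.tensorPi_top_inf_pi :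
    U.tensorPi ⊤ ⊓ pi Set.univ (fun _ => Z) = U.tensorPi Z := by
  ext m
  simp [mem_tensorPi]

theorem Submodule.mem_tensorPi_top_self {m : ι → K} :
    m ∈ U.tensorPi (⊤ : Submodule K K) ↔ m ∈ U := by
  refine ⟨fun h => by simpa using (mem_tensorPi.1 h).1 LinearMap.id,
    fun h => mem_tensorPi.2 ⟨fun φ => ?_, fun _ => trivial⟩⟩
  have : φ ∘ m = φ 1 • m := by
    ext i
    simpa [mul_comm] using φ.map_smul (m i) 1
  rw [this]
  exact U.smul_mem _ h

theorem Submodule.mem_tensorPi_top_pi {κ : Type*} [Fintype κ] [DecidableEq κ] {m : ι → κ → N} :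
    m ∈ U.tensorPi (⊤ : Submodule K (κ → N)) ↔ ∀ k, (fun i => m i k) ∈ U.tensorPi ⊤ := by
  simp only [mem_tensorPi, mem_top, implies_true, and_true]
  refine ⟨fun h k φ => h (φ ∘ₗ LinearMap.proj k), fun h φ => ?_⟩
  have : φ ∘ m = ∑ k, (φ ∘ₗ LinearMap.single K (fun _ => N) k) ∘ fun i => m i k := by
    ext i
    conv_lhs => rw [Function.comp_apply, ← Finset.univ_sum_single (m i), map_sum]
    simp
  rw [this]
  exact sum_mem fun k _ => h k _

theorem Submodule.finrank_tensorPi [Fintype ι] [FiniteDimensional K N] :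
    finrank K (U.tensorPi Z) = finrank K U * finrank K Z := by
  classical
  set b := finBasis K Z
  choose φ hφ using fun l => LinearMap.exists_extend (b.coord l)
  have hφb (l) (z : Z) : φ l z = b.repr z l := LinearMap.congr_fun (hφ l) z
  let e : U.tensorPi Z ≃ₗ[K] (Fin (finrank K Z) → U) :=
    { toFun := fun m l => ⟨φ l ∘ m, (mem_tensorPi.1 m.2).1 _⟩
      map_add' := fun m m' => by ext; simp
      map_smul' := fun c m => by ext; simp
      invFun := fun u => ⟨fun i => ∑ l, (u l : ι → K) i • (b l : N), mem_tensorPi.2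
        ⟨fun ψ => by
          have : ψ ∘ (fun i => ∑ l, (u l : ι → K) i • (b l : N)) =
              ∑ l, ψ (b l) • (u l : ι → K) := by
            ext i
            simp [mul_comm]
          rw [this]
          exact sum_mem fun l _ => U.smul_mem _ (u l).2,
        fun i => sum_mem fun l _ => Z.smul_mem _ (b l).2⟩⟩
      left_inv := fun m => by
        ext i
        have hm : m.1 i ∈ Z := (mem_tensorPi.1 m.2).2 i
        have := congrArg Subtype.val (b.sum_repr ⟨m.1 i, hm⟩)
        simp only [coe_sum, coe_smul] at this
        simpa [fun l => hφb l ⟨_, hm⟩] using this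
      right_inv := fun u => by
        ext l i
        simp [hφb, Finsupp.single_apply] }
  rw [e.finrank_eq, Module.finrank_pi_fintype]
  simp [mul_comm]

end TensorPi

section RTensorPi

variable {K : Type*} [Field K] {ι : Type*} {N : Type*} [AddCommGroup N] [Module K N]

theorem funext_dual_comp {m m' : ι → N} (h : ∀ φ : Dual K N, φ ∘ m = φ ∘ m') : m = m' := by
  funext i
  rw [← sub_eq_zero, ← forall_dual_apply_eq_zero_iff K]
  intro φ
  simpa [sub_eq_zero] using congrFun (h φ) i

variable [Fintype ι] [DecidableEq ι]

/-- `f ⊗ id_N` on `ι → N ≅ (ι → K) ⊗ N`. -/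
def LinearMap.rTensorPi (f : (ι → K) →ₗ[K] (ι → K)) : (ι → N) →ₗ[K] (ι → N) :=
  LinearMap.pi fun i => ∑ j, f (fun k => if j = k then 1 else 0) i • LinearMap.proj j

theorem LinearMap.rTensorPi_apply (f : (ι → K) →ₗ[K] (ι → K)) (m : ι → N) (i : ι) :
    f.rTensorPi m i = ∑ j, f (fun k => if j = k then 1 else 0) i • m j := by
  simp [rTensorPi]

theorem LinearMap.dual_comp_rTensorPi (f : (ι → K) →ₗ[K] (ι → K)) (φ : Dual K N) (m : ι → N) :
    φ ∘ f.rTensorPi m = f (φ ∘ m) := by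
  ext i
  rw [f.pi_apply_eq_sum_univ (φ ∘ m)]
  simp [rTensorPi_apply, mul_comm]

theorem LinearMap.rTensorPi_fiber {κ : Type*} (f : (ι → K) →ₗ[K] (ι → K)) (m : ι → κ → K)
    (k : κ) : (fun i => f.rTensorPi m i k) = f (fun i => m i k) :=
  f.dual_comp_rTensorPi (LinearMap.proj (R := K) (φ := fun _ : κ => K) k) m

theorem LinearMap.rTensorPi_fiber₂ {κ ρ : Type*} (f : (ι → K) →ₗ[K] (ι → K))
    (m : ι → κ → ρ → K) (j : κ) (k : ρ) : (fun i => f.rTensorPi m i j k) = f (fun i => m i j k) :=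
  f.dual_comp_rTensorPi
    (LinearMap.proj (R := K) (φ := fun _ : ρ => K) k ∘ₗ
      LinearMap.proj (φ := fun _ : κ => ρ → K) j) m

theorem LinearMap.rTensorPi_comp (f g : (ι → K) →ₗ[K] (ι → K)) :
    (f ∘ₗ g).rTensorPi = f.rTensorPi ∘ₗ (g.rTensorPi : (ι → N) →ₗ[K] (ι → N)) := by
  refine LinearMap.ext fun m => funext_dual_comp (K := K) fun φ => ?_
  simp only [comp_apply, dual_comp_rTensorPi]

theorem IsIdempotentElem.rTensorPi {f : (ι → K) →ₗ[K] (ι → K)} (hf : IsIdempotentElem f) :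
    IsIdempotentElem (f.rTensorPi : (ι → N) →ₗ[K] (ι → N)) := by
  rw [IsIdempotentElem, Module.End.mul_eq_comp, ← rTensorPi_comp, ← Module.End.mul_eq_comp, hf.eq]

theorem LinearMap.rTensorPi_comp_compLeft {N' : Type*} [AddCommGroup N'] [Module K N']
    (f : (ι → K) →ₗ[K] (ι → K)) (g : N →ₗ[K] N') :
    f.rTensorPi ∘ₗ g.compLeft ι = g.compLeft ι ∘ₗ f.rTensorPi := by
  ext m i
  simp [rTensorPi_apply, map_sum]

theorem LinearMap.ker_rTensorPi (f : (ι → K) →ₗ[K] (ι → K)) :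
    ker (f.rTensorPi : (ι → N) →ₗ[K] (ι → N)) = (ker f).tensorPi ⊤ := by
  ext m
  simp only [mem_ker, mem_tensorPi, mem_top, implies_true, and_true, ← dual_comp_rTensorPi]
  refine ⟨fun h φ => by ext; simp [h], fun h => funext_dual_comp (K := K) fun φ => ?_⟩
  rw [h φ]
  ext
  simp

theorem LinearMap.range_rTensorPi {f : (ι → K) →ₗ[K] (ι → K)} (hf : IsIdempotentElem f) :
    range (f.rTensorPi : (ι → N) →ₗ[K] (ι → N)) = (range f).tensorPi ⊤ := by
  ext m
  simp only [LinearMap.IsIdempotentElem.mem_range_iff hf.rTensorPi,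
    LinearMap.IsIdempotentElem.mem_range_iff hf, mem_tensorPi, mem_top, implies_true, and_true,
    ← dual_comp_rTensorPi]
  exact ⟨fun h φ => by rw [h], fun h => funext_dual_comp (K := K) h⟩

end RTensorPi

theorem IsIdempotentElem.compLeft {K M : Type*} [Semiring K] [AddCommMonoid M] [Module K M]
    {g : M →ₗ[K] M} (hg : IsIdempotentElem g) (I : Type*) : IsIdempotentElem (g.compLeft I) :=
  LinearMap.ext fun x => funext fun i => LinearMap.congr_fun hg.eq (x i)

def LinearEquiv.piComm (R α β M : Type*) [Semiring R] [AddCommMonoid M] [Module R M] :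
    (α → β → M) ≃ₗ[R] (β → α → M) :=
  { Equiv.piComm fun _ _ => M with
    map_add' := fun _ _ => rfl
    map_smul' := fun _ _ => rfl }

section Finrank

variable {K : Type*} [Field K] {E F : Type*} [AddCommGroup E] [Module K E] [FiniteDimensional K E]
  [AddCommGroup F] [Module K F]

theorem finrank_inf_ker_add_finrank_map (Y : Submodule K E) (f : E →ₗ[K] F) :
    finrank K ↥(Y ⊓ ker f) + finrank K (Y.map f) = finrank K Y := by
  have := finrank_range_add_finrank_ker (f.domRestrict Y)
  rwa [range_domRestrict, ker_domRestrict, ← finrank_map_subtype_eq, map_comap_subtype,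
    add_comm] at this

variable {P Q : E →ₗ[K] E} {S : Submodule K E}

theorem finrank_inf_range_add_finrank_inf_ker (hP : IsIdempotentElem P) (hS : Set.MapsTo P S S) :
    finrank K ↥(S ⊓ range P) + finrank K ↥(S ⊓ ker P) = finrank K S := by
  have hsup : S ⊓ range P ⊔ S ⊓ ker P = S := by
    refine le_antisymm (sup_le inf_le_left inf_le_left) fun x hx => mem_sup.2
      ⟨P x, ⟨hS hx, x, rfl⟩, x - P x, ⟨sub_mem hx (hS hx), ?_⟩, add_sub_cancel _ _⟩
    rw [SetLike.mem_coe, mem_ker, map_sub, ← Module.End.mul_apply, hP.eq, sub_self]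
  have hinf : S ⊓ range P ⊓ (S ⊓ ker P) = ⊥ :=
    disjoint_iff.1 (hP.isCompl.disjoint.mono inf_le_right inf_le_right)
  have := finrank_sup_add_finrank_inf_eq (S ⊓ range P) (S ⊓ ker P)
  rwa [hsup, hinf, finrank_bot, add_zero, eq_comm] at this

theorem finrank_eq_of_isIdempotentElem_of_commute (hP : IsIdempotentElem P)
    (hQ : IsIdempotentElem Q) (hPQ : Commute P Q) (hSP : Set.MapsTo P S S)
    (hSQ : Set.MapsTo Q S S) (hS : ∀ x ∈ S, P (Q x) = 0) :
    finrank K S = finrank K ↥(S ⊓ range P ⊓ ker Q) + finrank K ↥(S ⊓ ker P ⊓ range Q)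
      + finrank K ↥(S ⊓ ker P ⊓ ker Q) := by
  have hQP (x : E) : Q (P x) = P (Q x) := (LinearMap.congr_fun hPQ.eq x).symm
  have hrange : S ⊓ range P ⊓ ker Q = S ⊓ range P := by
    refine inf_eq_left.2 fun x hx => ?_
    obtain ⟨hxS, y, rfl⟩ := hx
    have hy : P y = P (P y) := by rw [← Module.End.mul_apply, hP.eq]
    rw [mem_ker, hy, hQP, hS _ hxS]
  have hker : Set.MapsTo Q ↑(S ⊓ ker P) ↑(S ⊓ ker P) := fun x hx =>
    ⟨hSQ hx.1, by rw [SetLike.mem_coe, mem_ker, ← hQP, mem_ker.1 hx.2, map_zero]⟩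
  have := finrank_inf_range_add_finrank_inf_ker hQ hker
  have := finrank_inf_range_add_finrank_inf_ker hP hSP
  rw [hrange]
  omega

end Finrank

section DotProduct

variable {R : Type*} {ι : Type*} [Fintype ι]

theorem forall_mem_span_dotProduct_eq_zero [CommSemiring R] {κ : Type*} {g : κ → ι → R}
    {x : ι → R} : (∀ u ∈ span R (Set.range g), u ⬝ᵥ x = 0) ↔ ∀ k, g k ⬝ᵥ x = 0 := by
  refine ⟨fun h k => h _ (subset_span ⟨k, rfl⟩), fun h u hu => ?_⟩
  have : span R (Set.range g) ≤ ker ((dotProductBilin R R).flip x) :=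
    span_le.2 (by rintro _ ⟨k, rfl⟩; simpa using h k)
  simpa using this hu

theorem eq_zero_of_mem_span_of_sum_sum_mul_eq_zero [Field R] [LinearOrder R]
    [IsStrictOrderedRing R] {κ τ : Type*} [Fintype κ] {s : τ → ι → κ → R} {m : ι → κ → R}
    (hm : m ∈ span R (Set.range s)) (h : ∀ t, ∑ i, ∑ k, s t i k * m i k = 0) : m = 0 := by
  let ψ : (ι → κ → R) →ₗ[R] R :=
    (dotProductBilin R R).flip (Function.uncurry m) ∘ₗ (LinearEquiv.curry R R ι κ).symm.toLinearMap
  have hψ (x : ι → κ → R) : ψ x = ∑ i, ∑ k, x i k * m i k := by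
    simp [ψ, dotProduct, Fintype.sum_prod_type]
  have hspan : span R (Set.range s) ≤ ker ψ :=
    span_le.2 (by rintro _ ⟨t, rfl⟩; simp [hψ, h t])
  have hmm : Function.uncurry m ⬝ᵥ Function.uncurry m = 0 := by
    rw [dotProduct, Fintype.sum_prod_type]
    exact (hψ m).symm.trans (mem_ker.1 (hspan hm))
  funext i k
  exact congrFun (dotProduct_self_eq_zero.1 hmm) (i, k)

end DotProduct

section DotProj

variable {ι : Type*} [Fintype ι] {V : Submodule ℝ (ι → ℝ)}

/-- The orthogonal projection onto `V` for the dot product. -/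
noncomputable def dotProj (V : Submodule ℝ (ι → ℝ)) : (ι → ℝ) →ₗ[ℝ] (ι → ℝ) :=
  let e := WithLp.linearEquiv 2 ℝ (ι → ℝ)
  e.toLinearMap ∘ₗ ((V.comap e.toLinearMap).starProjection : EuclideanSpace ℝ ι →ₗ[ℝ] _) ∘ₗ
    e.symm.toLinearMap

theorem dotProj_mem (x : ι → ℝ) : dotProj V x ∈ V :=
  starProjection_apply_mem (V.comap (WithLp.linearEquiv 2 ℝ (ι → ℝ)).toLinearMap) (WithLp.toLp 2 x)

theorem dotProj_eq_self {x : ι → ℝ} (hx : x ∈ V) : dotProj V x = x := by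
  have : WithLp.toLp 2 x ∈ V.comap (WithLp.linearEquiv 2 ℝ (ι → ℝ)).toLinearMap := hx
  simp [dotProj, starProjection_eq_self_iff.2 this]

theorem dotProj_dotProduct (x y : ι → ℝ) : dotProj V x ⬝ᵥ y = x ⬝ᵥ dotProj V y := by
  have := inner_starProjection_left_eq_right (𝕜 := ℝ)
    (K := V.comap (WithLp.linearEquiv 2 ℝ (ι → ℝ)).toLinearMap) (WithLp.toLp 2 x) (WithLp.toLp 2 y)
  simpa [dotProj, EuclideanSpace.inner_eq_star_dotProduct, dotProduct_comm] using this

theorem isIdempotentElem_dotProj : IsIdempotentElem (dotProj V) :=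
  LinearMap.ext fun x => dotProj_eq_self (dotProj_mem x)

theorem range_dotProj : range (dotProj V) = V :=
  le_antisymm (range_le_iff_comap.2 (eq_top_iff.2 fun x _ => dotProj_mem x))
    fun x hx => ⟨x, dotProj_eq_self hx⟩

theorem dotProduct_dotProj {u : ι → ℝ} (hu : u ∈ V) (x : ι → ℝ) :
    u ⬝ᵥ dotProj V x = u ⬝ᵥ x := by
  rw [← dotProj_dotProduct, dotProj_eq_self hu]

theorem mem_ker_dotProj {x : ι → ℝ} : x ∈ ker (dotProj V) ↔ ∀ u ∈ V, u ⬝ᵥ x = 0 := by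
  refine ⟨fun hx u hu => by rw [← dotProduct_dotProj hu, mem_ker.1 hx, dotProduct_zero],
    fun h => ?_⟩
  rw [mem_ker, ← dotProduct_self_eq_zero, dotProduct_dotProj (dotProj_mem x)]
  exact h _ (dotProj_mem x)

theorem finrank_ker_dotProj (V : Submodule ℝ (ι → ℝ)) :
    (finrank ℝ ↥(ker (dotProj V)) : ℤ) = Fintype.card ι - finrank ℝ V := by
  have := finrank_range_add_finrank_ker (dotProj V)
  rw [range_dotProj, finrank_fintype_fun_eq_card] at this
  omega

end DotProj

section Tripartite

variable (v : Fin d₁ → Fin d₂ → Fin d₃ → ℝ)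

def fiberSpan₁ : Submodule ℝ (Fin d₁ → ℝ) :=
  span ℝ (Set.range fun q : Fin d₂ × Fin d₃ => fun j₁ => v j₁ q.1 q.2)

def fiberSpan₂ : Submodule ℝ (Fin d₂ → ℝ) :=
  fiberSpan₁ (Function.swap v)

def sliceSpan : Submodule ℝ (Fin d₁ → Fin d₂ → ℝ) :=
  span ℝ (Set.range fun j₃ j₁ j₂ => v j₁ j₂ j₃)

def contract₁ : (Fin d₂ → Fin d₃ → ℝ) →ₗ[ℝ] (Fin d₁ → ℝ) where
  toFun x j₁ := ∑ j₂, ∑ j₃, v j₁ j₂ j₃ * x j₂ j₃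
  map_add' x y := by ext; simp [mul_add, Finset.sum_add_distrib]
  map_smul' c x := by ext; simp [Finset.mul_sum, mul_left_comm]

noncomputable def projFirst :
    (Fin d₁ → Fin d₂ → Fin d₃ → ℝ) →ₗ[ℝ] (Fin d₁ → Fin d₂ → Fin d₃ → ℝ) :=
  (dotProj (fiberSpan₁ v)).rTensorPi

noncomputable def projSecond :
    (Fin d₁ → Fin d₂ → Fin d₃ → ℝ) →ₗ[ℝ] (Fin d₁ → Fin d₂ → Fin d₃ → ℝ) :=
  (dotProj (fiberSpan₂ v)).rTensorPi.compLeft (Fin d₁)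

theorem fiber_mem_fiberSpan₁ (j₂ : Fin d₂) (j₃ : Fin d₃) :
    (fun j₁ => v j₁ j₂ j₃) ∈ fiberSpan₁ v :=
  subset_span ⟨(j₂, j₃), rfl⟩

theorem fiber_mem_fiberSpan₂ (j₁ : Fin d₁) (j₃ : Fin d₃) :
    (fun j₂ => v j₁ j₂ j₃) ∈ fiberSpan₂ v :=
  fiber_mem_fiberSpan₁ (Function.swap v) j₁ j₃

theorem S₁_eq_ker_dotProj : S₁ v = ker (dotProj (fiberSpan₁ v)) := by
  ext w
  rw [mem_ker_dotProj, fiberSpan₁, forall_mem_span_dotProduct_eq_zero, Prod.forall]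
  rfl

theorem finrank_fiberSpan₁_add_n₁ : finrank ℝ (fiberSpan₁ v) + n₁ v = d₁ := by
  have := finrank_range_add_finrank_ker (dotProj (fiberSpan₁ v))
  rwa [range_dotProj, ← S₁_eq_ker_dotProj, finrank_fin_fun] at this

theorem finrank_fiberSpan₂_add_n₂ : finrank ℝ (fiberSpan₂ v) + n₂ v = d₂ :=
  finrank_fiberSpan₁_add_n₁ (Function.swap v)

theorem finrank_sliceSpan_add_n₃ : finrank ℝ (sliceSpan v) + n₃ v = d₃ := by
  have hker : ker (Fintype.linearCombination ℝ fun j₃ j₁ j₂ => v j₁ j₂ j₃) = S₃ v := by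
    ext y
    simp only [mem_ker, Fintype.linearCombination_apply, funext_iff]
    simp [S₃, Finset.sum_apply, mul_comm]
  have := finrank_range_add_finrank_ker (Fintype.linearCombination ℝ fun j₃ j₁ j₂ => v j₁ j₂ j₃)
  rwa [Fintype.range_linearCombination, hker, finrank_fin_fun] at this

theorem sliceSpan_le_tensorPi : sliceSpan v ≤ (fiberSpan₁ v).tensorPi (fiberSpan₂ v) := by
  refine span_le.2 ?_
  rintro _ ⟨j₃, rfl⟩
  rw [SetLike.mem_coe, ← tensorPi_top_inf_pi, mem_inf, mem_tensorPi_top_pi]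
  simp only [mem_tensorPi_top_self, mem_pi, Set.mem_univ, true_implies]
  exact ⟨fun j₂ => fiber_mem_fiberSpan₁ v j₂ j₃, fun j₁ => fiber_mem_fiberSpan₂ v j₁ j₃⟩

theorem isIdempotentElem_projFirst : IsIdempotentElem (projFirst v) :=
  isIdempotentElem_dotProj.rTensorPi

theorem isIdempotentElem_projSecond : IsIdempotentElem (projSecond v) :=
  isIdempotentElem_dotProj.rTensorPi.compLeft _

theorem commute_projFirst_projSecond : Commute (projFirst v) (projSecond v) :=
  rTensorPi_comp_compLeft _ _

variable {v}

theorem projSecond_apply (w : Fin d₁ → Fin d₂ → Fin d₃ → ℝ) (j₁ : Fin d₁) :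
    projSecond v w j₁ = (dotProj (fiberSpan₂ v)).rTensorPi (w j₁) :=
  rfl

theorem dotProduct_fiber_projFirst (j₂ : Fin d₂) (j₃ : Fin d₃)
    (w : Fin d₁ → Fin d₂ → Fin d₃ → ℝ) (a : Fin d₂) (b : Fin d₃) :
    (fun j₁ => v j₁ j₂ j₃) ⬝ᵥ (fun j₁ => projFirst v w j₁ a b) =
      (fun j₁ => v j₁ j₂ j₃) ⬝ᵥ (fun j₁ => w j₁ a b) := by
  rw [projFirst, rTensorPi_fiber₂]
  exact dotProduct_dotProj (fiber_mem_fiberSpan₁ v j₂ j₃) _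

theorem dotProduct_fiber_projSecond (j₁ : Fin d₁) (j₃ : Fin d₃)
    (w : Fin d₁ → Fin d₂ → Fin d₃ → ℝ) (a : Fin d₁) (b : Fin d₃) :
    (fun j₂ => v j₁ j₂ j₃) ⬝ᵥ (fun j₂ => projSecond v w a j₂ b) =
      (fun j₂ => v j₁ j₂ j₃) ⬝ᵥ (fun j₂ => w a j₂ b) := by
  rw [projSecond_apply, rTensorPi_fiber]
  exact dotProduct_dotProj (fiber_mem_fiberSpan₂ v j₁ j₃) _

theorem mapsTo_projFirst : Set.MapsTo (projFirst v) (S₄ v) (S₄ v) := by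
  rintro w ⟨h₁, h₂, h₃⟩
  refine ⟨fun j₃ k₃ => ?_, fun j₂ k₂ => ?_, fun j₁ k₁ => ?_⟩
  · calc _ = ∑ j₂, ∑ j₁, v j₁ j₂ j₃ * projFirst v w j₁ j₂ k₃ := Finset.sum_comm
      _ = ∑ j₂, ∑ j₁, v j₁ j₂ j₃ * w j₁ j₂ k₃ :=
        Finset.sum_congr rfl fun j₂ _ => dotProduct_fiber_projFirst j₂ j₃ w j₂ k₃
      _ = 0 := Finset.sum_comm.trans (h₁ j₃ k₃)
  · calc _ = ∑ j₃, ∑ j₁, v j₁ j₂ j₃ * projFirst v w j₁ k₂ j₃ := Finset.sum_comm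
      _ = ∑ j₃, ∑ j₁, v j₁ j₂ j₃ * w j₁ k₂ j₃ :=
        Finset.sum_congr rfl fun j₃ _ => dotProduct_fiber_projFirst j₂ j₃ w k₂ j₃
      _ = 0 := Finset.sum_comm.trans (h₂ j₂ k₂)
  · have h₀ : (contract₁ v).compLeft (Fin d₁) w = 0 := funext fun k₁ => funext fun j₁ => h₃ j₁ k₁
    have := LinearMap.congr_fun (rTensorPi_comp_compLeft (dotProj (fiberSpan₁ v)) (contract₁ v)) w
    rw [comp_apply, comp_apply, h₀, map_zero] at this
    exact (congrFun (congrFun this k₁) j₁).symm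

theorem swap_mem_S₄_iff {w : Fin d₁ → Fin d₂ → Fin d₃ → ℝ} :
    Function.swap w ∈ S₄ (Function.swap v) ↔ w ∈ S₄ v :=
  ⟨fun ⟨h₁, h₂, h₃⟩ => ⟨fun j₃ k₃ => Finset.sum_comm.trans (h₁ j₃ k₃), h₃, h₂⟩,
    fun ⟨h₁, h₂, h₃⟩ => ⟨fun j₃ k₃ => Finset.sum_comm.trans (h₁ j₃ k₃), h₃, h₂⟩⟩

theorem swap_projFirst (w : Fin d₁ → Fin d₂ → Fin d₃ → ℝ) :
    Function.swap (projFirst v w) = projSecond (Function.swap v) (Function.swap w) := by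
  ext j₂ j₁ j₃
  simp [Function.swap, projFirst, projSecond_apply, rTensorPi_apply, Finset.sum_apply, fiberSpan₂]

theorem swap_projSecond (w : Fin d₁ → Fin d₂ → Fin d₃ → ℝ) :
    Function.swap (projSecond v w) = projFirst (Function.swap v) (Function.swap w) := by
  ext j₂ j₁ j₃
  simp [Function.swap, projFirst, projSecond_apply, rTensorPi_apply, Finset.sum_apply, fiberSpan₂]

theorem mapsTo_projSecond : Set.MapsTo (projSecond v) (S₄ v) (S₄ v) := fun w hw => by
  rw [SetLike.mem_coe, ← swap_mem_S₄_iff, swap_projSecond]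
  exact mapsTo_projFirst (swap_mem_S₄_iff.2 hw)

theorem projFirst_projSecond_eq_zero (hW : sliceSpan v = (fiberSpan₁ v).tensorPi (fiberSpan₂ v))
    {w : Fin d₁ → Fin d₂ → Fin d₃ → ℝ} (hw : w ∈ S₄ v) : projFirst v (projSecond v w) = 0 := by
  suffices h : ∀ k₃, (fun j₁ j₂ => projFirst v (projSecond v w) j₁ j₂ k₃) = 0 from
    funext fun j₁ => funext fun j₂ => funext fun k₃ => congrFun (congrFun (h k₃) j₁) j₂
  intro k₃
  refine eq_zero_of_mem_span_of_sum_sum_mul_eq_zero (s := fun j₃ j₁ j₂ => v j₁ j₂ j₃) ?_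
    fun j₃ => ?_
  · change _ ∈ sliceSpan v
    rw [hW, ← tensorPi_top_inf_pi, mem_inf, mem_tensorPi_top_pi]
    simp only [mem_tensorPi_top_self, mem_pi, Set.mem_univ, true_implies]
    refine ⟨fun j₂ => ?_, fun j₁ => ?_⟩
    · rw [projFirst, rTensorPi_fiber₂]
      exact dotProj_mem _
    · rw [← Module.End.mul_apply, (commute_projFirst_projSecond v).eq, Module.End.mul_apply,
        projSecond_apply, rTensorPi_fiber]
      exact dotProj_mem _
  · calc ∑ j₁, ∑ j₂, v j₁ j₂ j₃ * projFirst v (projSecond v w) j₁ j₂ k₃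
        = ∑ j₂, ∑ j₁, v j₁ j₂ j₃ * projFirst v (projSecond v w) j₁ j₂ k₃ := Finset.sum_comm
      _ = ∑ j₂, ∑ j₁, v j₁ j₂ j₃ * projSecond v w j₁ j₂ k₃ :=
        Finset.sum_congr rfl fun j₂ _ => dotProduct_fiber_projFirst j₂ j₃ _ j₂ k₃
      _ = ∑ j₁, ∑ j₂, v j₁ j₂ j₃ * projSecond v w j₁ j₂ k₃ := Finset.sum_comm
      _ = ∑ j₁, ∑ j₂, v j₁ j₂ j₃ * w j₁ j₂ k₃ :=
        Finset.sum_congr rfl fun j₁ _ => dotProduct_fiber_projSecond j₁ j₃ w j₁ k₃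
      _ = 0 := hw.1 j₃ k₃

theorem S₄_inf_ker_projFirst :
    S₄ v ⊓ ker (projFirst v) = ker ((contract₁ v).compLeft (Fin d₁)) ⊓ ker (projFirst v) := by
  ext w
  simp only [mem_inf, and_congr_left_iff]
  intro hP
  have hfiber (a : Fin d₂) (b : Fin d₃) : ∀ u ∈ fiberSpan₁ v, u ⬝ᵥ (fun j₁ => w j₁ a b) = 0 := by
    rw [← mem_ker_dotProj, mem_ker, ← rTensorPi_fiber₂, ← projFirst, mem_ker.1 hP]
    rfl
  rw [mem_ker, funext_iff]
  refine ⟨fun ⟨_, _, h₃⟩ k₁ => funext fun j₁ => h₃ j₁ k₁,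
    fun h => ⟨fun j₃ k₃ => ?_, fun j₂ k₂ => ?_, fun j₁ k₁ => congrFun (h k₁) j₁⟩⟩
  · rw [Finset.sum_comm]
    exact Finset.sum_eq_zero fun j₂ _ => hfiber j₂ k₃ _ (fiber_mem_fiberSpan₁ v j₂ j₃)
  · rw [Finset.sum_comm]
    exact Finset.sum_eq_zero fun j₃ _ => hfiber k₂ j₃ _ (fiber_mem_fiberSpan₁ v j₂ j₃)

theorem contract₁_comp_rTensorPi :
    contract₁ v ∘ₗ (dotProj (fiberSpan₂ v)).rTensorPi = contract₁ v := by
  refine LinearMap.ext fun x => funext fun j₁ => ?_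
  calc ∑ j₂, ∑ j₃, v j₁ j₂ j₃ * (dotProj (fiberSpan₂ v)).rTensorPi x j₂ j₃
      = ∑ j₃, ∑ j₂, v j₁ j₂ j₃ * (dotProj (fiberSpan₂ v)).rTensorPi x j₂ j₃ := Finset.sum_comm
    _ = ∑ j₃, ∑ j₂, v j₁ j₂ j₃ * x j₂ j₃ := Finset.sum_congr rfl fun j₃ _ => by
      change _ ⬝ᵥ (fun j₂ => _) = _
      rw [rTensorPi_fiber]
      exact dotProduct_dotProj (fiber_mem_fiberSpan₂ v j₁ j₃) _
    _ = ∑ j₂, ∑ j₃, v j₁ j₂ j₃ * x j₂ j₃ := Finset.sum_comm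

theorem range_contract₁ : range (contract₁ v) = fiberSpan₁ v := by
  refine le_antisymm (range_le_iff_comap.2 (eq_top_iff.2 fun x _ => ?_)) (span_le.2 ?_)
  · have : contract₁ v x = ∑ q : Fin d₂ × Fin d₃, x q.1 q.2 • fun j₁ => v j₁ q.1 q.2 := by
      ext j₁
      simp [contract₁, Finset.sum_apply, Fintype.sum_prod_type, mul_comm]
    rw [mem_comap, this]
    exact sum_mem fun q _ => smul_mem _ _ (subset_span ⟨q, rfl⟩)
  · rintro _ ⟨⟨j₂, j₃⟩, rfl⟩
    refine ⟨Pi.single j₂ (Pi.single j₃ 1), ?_⟩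
    ext j₁
    simp [contract₁, Pi.single_apply, ite_apply]

theorem finrank_tensorPi_top_inf_ker_contract₁ :
    (finrank ℝ ↥((fiberSpan₂ v).tensorPi ⊤ ⊓ ker (contract₁ v)) : ℤ) =
      finrank ℝ (fiberSpan₂ v) * d₃ - finrank ℝ (fiberSpan₁ v) := by
  have h := finrank_inf_ker_add_finrank_map (range (dotProj (fiberSpan₂ v)).rTensorPi) (contract₁ v)
  rw [← range_comp, contract₁_comp_rTensorPi, range_contract₁,
    range_rTensorPi isIdempotentElem_dotProj, range_dotProj, finrank_tensorPi, finrank_top,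
    finrank_fin_fun] at h
  omega

theorem S₄_inf_ker_inf_range :
    S₄ v ⊓ ker (projFirst v) ⊓ range (projSecond v) =
      (ker (dotProj (fiberSpan₁ v))).tensorPi ((fiberSpan₂ v).tensorPi ⊤ ⊓ ker (contract₁ v)) := by
  rw [S₄_inf_ker_projFirst, projSecond, range_compLeft, range_rTensorPi isIdempotentElem_dotProj,
    range_dotProj, ker_compLeft, projFirst, ker_rTensorPi]
  ext w
  simp only [mem_inf, mem_pi, mem_tensorPi, Set.mem_univ, true_implies, forall_and, mem_top]
  tauto

theorem S₄_inf_ker_inf_ker :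
    S₄ v ⊓ ker (projFirst v) ⊓ ker (projSecond v) =
      (ker (dotProj (fiberSpan₁ v))).tensorPi (ker (dotProj (fiberSpan₂ v)).rTensorPi) := by
  have hle : ker (projSecond v) ≤ ker ((contract₁ v).compLeft (Fin d₁)) := fun w hw => by
    refine funext fun k => ?_
    rw [compLeft_apply, Function.comp_apply, ← contract₁_comp_rTensorPi, comp_apply,
      ← projSecond_apply, mem_ker.1 hw, Pi.zero_apply, map_zero, Pi.zero_apply]
  rw [S₄_inf_ker_projFirst, inf_right_comm, inf_eq_right.2 hle, inf_comm,
    ← tensorPi_top_inf_pi, ← ker_rTensorPi, projSecond, ker_compLeft, projFirst]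

theorem finrank_S₄_inf_range_inf_ker_eq_swap :
    finrank ℝ ↥(S₄ v ⊓ range (projFirst v) ⊓ ker (projSecond v)) =
      finrank ℝ ↥(S₄ (Function.swap v) ⊓ ker (projFirst (Function.swap v)) ⊓
        range (projSecond (Function.swap v))) := by
  have hmap : (S₄ v ⊓ range (projFirst v) ⊓ ker (projSecond v)).map
      (LinearEquiv.piComm ℝ (Fin d₁) (Fin d₂) (Fin d₃ → ℝ)).toLinearMap =
      S₄ (Function.swap v) ⊓ range (projSecond (Function.swap v)) ⊓
        ker (projFirst (Function.swap v)) := by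
    ext w
    rw [mem_map_equiv]
    change Function.swap w ∈ _ ↔ _
    simp only [mem_inf, mem_ker, LinearMap.IsIdempotentElem.mem_range_iff
      (isIdempotentElem_projFirst v), LinearMap.IsIdempotentElem.mem_range_iff
      (isIdempotentElem_projSecond (Function.swap v))]
    refine and_congr (and_congr swap_mem_S₄_iff ?_) ?_
    · rw [show projSecond (Function.swap v) w = Function.swap (projFirst v (Function.swap w)) from
        (swap_projFirst _).symm]
      exact ⟨congrArg Function.swap, congrArg Function.swap⟩
    · rw [show projFirst (Function.swap v) w = Function.swap (projSecond v (Function.swap w)) from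
        (swap_projSecond _).symm]
      exact ⟨congrArg Function.swap, congrArg Function.swap⟩
  rw [inf_right_comm (a := S₄ (Function.swap v)), ← hmap, LinearEquiv.finrank_map_eq]

theorem finrank_S₄_inf_ker_inf_range {k₁ k₂ : ℕ} (h₁ : finrank ℝ (fiberSpan₁ v) = k₁)
    (h₂ : finrank ℝ (fiberSpan₂ v) = k₂) :
    (finrank ℝ ↥(S₄ v ⊓ ker (projFirst v) ⊓ range (projSecond v)) : ℤ) =
      ((d₁ : ℤ) - k₁) * (k₂ * d₃ - k₁) := by
  rw [S₄_inf_ker_inf_range, finrank_tensorPi, Nat.cast_mul, finrank_ker_dotProj,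
    finrank_tensorPi_top_inf_ker_contract₁, h₁, h₂, Fintype.card_fin]

theorem finrank_S₄_inf_ker_inf_ker {k₁ k₂ : ℕ} (h₁ : finrank ℝ (fiberSpan₁ v) = k₁)
    (h₂ : finrank ℝ (fiberSpan₂ v) = k₂) :
    (finrank ℝ ↥(S₄ v ⊓ ker (projFirst v) ⊓ ker (projSecond v)) : ℤ) =
      ((d₁ : ℤ) - k₁) * ((d₂ - k₂) * d₃) := by
  rw [S₄_inf_ker_inf_ker, finrank_tensorPi, ker_rTensorPi, finrank_tensorPi, finrank_top,
    finrank_fin_fun]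
  push_cast
  rw [finrank_ker_dotProj, finrank_ker_dotProj, h₁, h₂, Fintype.card_fin, Fintype.card_fin]

end Tripartite

theorem intersection_invariant_of_k3_eq_k1_mul_k2_general
    (d₁ d₂ d₃ k₁ k₂ : ℕ)
    (hk₁d : k₁ ≤ d₁) (hk₂d : k₂ ≤ d₂) (hk₃d : k₁ * k₂ ≤ d₃)
    (v : Fin d₁ → Fin d₂ → Fin d₃ → ℝ)
    (h₁ : n₁ v = d₁ - k₁) (h₂ : n₂ v = d₂ - k₂) (h₃ : n₃ v = d₃ - k₁ * k₂) :
    (n₄ v : ℤ) = (d₁ : ℤ) * d₂ * d₃ - k₁ * d₁ - k₂ * d₂ - k₁ * k₂ * d₃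
      + (k₁ : ℤ) ^ 2 + (k₂ : ℤ) ^ 2 := by
  have hV₁ : finrank ℝ (fiberSpan₁ v) = k₁ := by have := finrank_fiberSpan₁_add_n₁ v; omega
  have hV₂ : finrank ℝ (fiberSpan₂ v) = k₂ := by have := finrank_fiberSpan₂_add_n₂ v; omega
  have hW : sliceSpan v = (fiberSpan₁ v).tensorPi (fiberSpan₂ v) := by
    refine eq_of_le_of_finrank_le (sliceSpan_le_tensorPi v) ?_
    have := finrank_sliceSpan_add_n₃ v
    rw [finrank_tensorPi, hV₁, hV₂]
    omega
  rw [n₄, finrank_eq_of_isIdempotentElem_of_commute (isIdempotentElem_projFirst v)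
    (isIdempotentElem_projSecond v) (commute_projFirst_projSecond v) mapsTo_projFirst
    mapsTo_projSecond fun w hw => projFirst_projSecond_eq_zero hW hw,
    finrank_S₄_inf_range_inf_ker_eq_swap]
  push_cast
  rw [finrank_S₄_inf_ker_inf_range (v := Function.swap v) hV₂ hV₁,
    finrank_S₄_inf_ker_inf_range hV₁ hV₂, finrank_S₄_inf_ker_inf_ker hV₁ hV₂]
  ring

/-- **The intersection invariant when `(k₁, k₂, k₃) = (k₁, k₂, k₁k₂)`.**
If a tripartite state `v` of dimensions `(d₁, d₂, d₃)` has nullities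
`n₁(v) = d₁ − k₁`, `n₂(v) = d₂ − k₂`, `n₃(v) = d₃ − k₁k₂`, then
`ñ₄(v) = d₁d₂d₃ − k₁d₁ − k₂d₂ − k₁k₂d₃ + k₁² + k₂²`, i.e. the set
`M_{k₁,k₂,k₁k₂} = (k₁² + k₂²)` is a singleton. -/
theorem intersection_invariant_of_k3_eq_k1_mul_k2
    (d₁ d₂ d₃ k₁ k₂ : ℕ)
    (hd₁ : 0 < d₁) (hd₂ : 0 < d₂) (hd₃ : 0 < d₃)
    (hk₁ : 0 < k₁) (hk₂ : 0 < k₂)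
    (hk₁d : k₁ ≤ d₁) (hk₂d : k₂ ≤ d₂) (hk₃d : k₁ * k₂ ≤ d₃)
    (v : Fin d₁ → Fin d₂ → Fin d₃ → ℝ)
    (h₁ : n₁ v = d₁ - k₁) (h₂ : n₂ v = d₂ - k₂) (h₃ : n₃ v = d₃ - k₁ * k₂) :
    (n₄ v : ℤ) = (d₁ : ℤ) * d₂ * d₃ - k₁ * d₁ - k₂ * d₂ - k₁ * k₂ * d₃
      + (k₁ : ℤ) ^ 2 + (k₂ : ℤ) ^ 2 :=
  intersection_invariant_of_k3_eq_k1_mul_k2_general d₁ d₂ d₃ k₁ k₂ hk₁d hk₂d hk₃d v h₁ h₂ h₃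
end
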